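/- Let (V, d_T) be a finite tree metric in which all pairwise distances between distinct pairs are distinct, and let MST(V, d_T) denote its unique minimum spanning tree over the complete graph on V with edge weights d_T. If v, w ∈ V are distinct and {v, w} is not an edge of MST(V, d_T), then there exists a vertex u ∈ V with u ≺ (v,w) and {v, u} ∈ MST(V, d_T), where u ≺ (v,w) means d_T(u,v) < d_T(v,w) and d_T(u,w) < d_T(v,w). -/

import Mathlib

/-- The tree metric: the weighted length of the unique path between `x` and `y`
in the tree `G` with edge weights `f`. -/
noncomputable def treeDist {W : Type} (G : SimpleGraph W) (hG : G.IsTree) (f : Sym2 W → ℝ)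
    (x y : W) : ℝ :=
  ((hG.existsUnique_path x y).choose.edges.map f).sum

/-- `d` is a tree metric: it is the restriction to `V` of the path metric of a finite
weighted tree with positive edge weights. -/
def IsTreeMetric {V : Type} (d : V → V → ℝ) : Prop :=
  ∃ (W : Type) (_ : Fintype W) (G : SimpleGraph W) (hG : G.IsTree) (f : Sym2 W → ℝ)
    (ι : V → W), (∀ e ∈ G.edgeSet, 0 < f e) ∧ Function.Injective ι ∧
      ∀ x y, d x y = treeDist G hG f (ι x) (ι y)

/-- All pairwise distances between distinct pairs are distinct: two distinct pairs can only
have equal distance if they are the same unordered pair. -/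
def DistinctDists {V : Type} (d : V → V → ℝ) : Prop :=
  ∀ x y x' y' : V, x ≠ y → x' ≠ y' → d x y = d x' y' → s(x, y) = s(x', y')

/-- The weight of an unordered edge under the (symmetric) distance `d`. -/
noncomputable def sym2Weight {V : Type} (d : V → V → ℝ) : Sym2 V → ℝ :=
  Sym2.lift ⟨fun x y => (d x y + d y x) / 2, fun _ _ => by ring⟩

/-- The total `d`-weight of a finite set of edges. -/
noncomputable def edgesWeight {V : Type} (d : V → V → ℝ) (E : Finset (Sym2 V)) : ℝ :=
  ∑ e ∈ E, sym2Weight d e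

/-- `E` is the edge set of a spanning tree on `V`: it has no loops and the resulting
graph is connected and acyclic. -/
def IsSpanningTreeEdges {V : Type} (E : Set (Sym2 V)) : Prop :=
  (∀ e ∈ E, ¬ e.IsDiag) ∧ (SimpleGraph.fromEdgeSet E).IsTree

/-- `M` is a minimum spanning tree using only edges from `Base`, with edge weights `d`:
it is a spanning tree contained in `Base` minimizing the total weight among all such
spanning trees.  Taking `Base = Set.univ` gives the MST over the complete graph on `V`. -/
def IsMSTOver {V : Type} [Fintype V] [DecidableEq V] (d : V → V → ℝ)
    (Base : Set (Sym2 V)) (M : Finset (Sym2 V)) : Prop :=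
  ↑M ⊆ Base ∧ IsSpanningTreeEdges (↑M : Set (Sym2 V)) ∧
    ∀ E : Finset (Sym2 V), ↑E ⊆ Base → IsSpanningTreeEdges (↑E : Set (Sym2 V)) →
      edgesWeight d M ≤ edgesWeight d E

/-!
Let `u` be the vertex after `v` on the MST path from `v` to `w`. By the cycle property of minimum
spanning trees, every edge on the MST path between `a` and `b` weighs at most `d a b`; this gives
`d v u < d v w`, and along the path `d v u ≤ d v a` and `d a b < d v b` for each further edge
`(a, b)`. A tree metric satisfies the four-point condition (medians of triples exist in a tree),
and together with these bounds it carries `d u x < d v x` from `x = u` along the path to `x = w`.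
-/

open SimpleGraph Walk

namespace SimpleGraph.IsTree

variable {W : Type} {G : SimpleGraph W} (hG : G.IsTree)

noncomputable def uniquePath (x y : W) : G.Walk x y := (hG.existsUnique_path x y).choose

theorem uniquePath_isPath (x y : W) : (hG.uniquePath x y).IsPath :=
  (hG.existsUnique_path x y).choose_spec.1

theorem uniquePath_eq {x y : W} {p : G.Walk x y} (hp : p.IsPath) : hG.uniquePath x y = p :=
  ((hG.existsUnique_path x y).choose_spec.2 p hp).symm

theorem uniquePath_append {x y m : W} (hm : m ∈ (hG.uniquePath x y).support) :
    (hG.uniquePath x m).append (hG.uniquePath m y) = hG.uniquePath x y := by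
  classical
  have hp := hG.uniquePath_isPath x y
  rw [hG.uniquePath_eq (hp.takeUntil hm), hG.uniquePath_eq (hp.dropUntil hm), take_spec]

theorem mem_support_uniquePath_or {x y a b : W} (ha : a ∈ (hG.uniquePath x y).support)
    (hb : b ∈ (hG.uniquePath x y).support) :
    b ∈ (hG.uniquePath x a).support ∨ b ∈ (hG.uniquePath a y).support := by
  rwa [← hG.uniquePath_append ha, mem_support_append_iff] at hb

/-- The path from `u` to `q` is the bypass of the walk from `u` through `p` to `q`. -/
theorem mem_support_uniquePath_of_notMem {u p q m : W} (hq : m ∈ (hG.uniquePath u q).support)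
    (hp : m ∉ (hG.uniquePath u p).support) : m ∈ (hG.uniquePath p q).support := by
  classical
  have hbypass := hG.uniquePath_eq ((hG.uniquePath u p).append (hG.uniquePath p q)).bypass_isPath
  rw [hbypass] at hq
  have := support_bypass_subset_support _ hq
  rw [mem_support_append_iff] at this
  tauto

theorem exists_median (x y z : W) : ∃ m, m ∈ (hG.uniquePath x y).support ∧
    m ∈ (hG.uniquePath x z).support ∧ m ∈ (hG.uniquePath y z).support := by
  suffices ∀ {x} (p : G.Walk x y), p.IsPath → ∃ m, m ∈ p.support ∧
      m ∈ (hG.uniquePath x z).support ∧ m ∈ (hG.uniquePath y z).support by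
    simpa only [hG.uniquePath_eq (hG.uniquePath_isPath x y)] using
      this _ (hG.uniquePath_isPath x y)
  intro x p hp
  induction p with
  | nil => exact ⟨_, start_mem_support _, start_mem_support _, start_mem_support _⟩
  | @cons x x₁ y hadj tail ih =>
    by_cases hx : x ∈ (hG.uniquePath y z).support
    · exact ⟨x, start_mem_support _, start_mem_support _, hx⟩
    rw [cons_isPath_iff] at hp
    obtain ⟨m, hm_tail, hm_z, hm_yz⟩ := ih hp.1
    have hx₁ : x₁ ∈ (hG.uniquePath x z).support := by
      by_contra hx₁
      have hback := hG.uniquePath_eq ((hG.uniquePath_isPath x z).cons hx₁ (h := hadj.symm))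
      refine hx (hG.mem_support_uniquePath_of_notMem (u := x₁) ?_ ?_)
      · simp [hback]
      · rw [hG.uniquePath_eq hp.1]
        exact hp.2
    refine ⟨m, List.mem_cons_of_mem _ hm_tail, ?_, hm_yz⟩
    rw [← hG.uniquePath_append hx₁]
    exact (mem_support_append_iff _ _).2 (Or.inr hm_z)

end SimpleGraph.IsTree

section TreeDist

variable {W : Type} {G : SimpleGraph W} (hG : G.IsTree) (f : Sym2 W → ℝ)

theorem treeDist_eq_of_isPath {x y : W} {p : G.Walk x y} (hp : p.IsPath) :
    treeDist G hG f x y = (p.edges.map f).sum := by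
  rw [← hG.uniquePath_eq hp]
  rfl

theorem treeDist_comm (x y : W) : treeDist G hG f x y = treeDist G hG f y x := by
  rw [treeDist_eq_of_isPath hG f (hG.uniquePath_isPath x y),
    treeDist_eq_of_isPath hG f (hG.uniquePath_isPath x y).reverse, edges_reverse,
    List.map_reverse, List.sum_reverse]

theorem treeDist_self (x : W) : treeDist G hG f x x = 0 := by
  simp [treeDist_eq_of_isPath hG f IsPath.nil]

variable {f}

theorem treeDist_pos (hf : ∀ e ∈ G.edgeSet, 0 < f e) {x y : W} (hxy : x ≠ y) :
    0 < treeDist G hG f x y := by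
  refine List.sum_pos _ (fun a ha => ?_) (by simpa using not_nil_of_ne hxy)
  obtain ⟨e, he, rfl⟩ := List.mem_map.mp ha
  exact hf e ((hG.uniquePath x y).edges_subset_edgeSet he)

theorem treeDist_nonneg (hf : ∀ e ∈ G.edgeSet, 0 < f e) (x y : W) :
    0 ≤ treeDist G hG f x y := by
  rcases eq_or_ne x y with rfl | hxy
  · exact (treeDist_self hG f x).ge
  · exact (treeDist_pos hG hf hxy).le

variable (f)

theorem treeDist_add_of_mem_support {x y m : W} (hm : m ∈ (hG.uniquePath x y).support) :
    treeDist G hG f x m + treeDist G hG f m y = treeDist G hG f x y := by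
  rw [treeDist_eq_of_isPath hG f (hG.uniquePath_isPath x y), ← hG.uniquePath_append hm,
    edges_append, List.map_append, List.sum_append]
  rfl

variable {f}

theorem treeDist_triangle (hf : ∀ e ∈ G.edgeSet, 0 < f e) (x y z : W) :
    treeDist G hG f x z ≤ treeDist G hG f x y + treeDist G hG f y z := by
  obtain ⟨m, hxy, hxz, hyz⟩ := hG.exists_median x y z
  have := treeDist_nonneg hG hf m y
  linarith [treeDist_add_of_mem_support hG f hxy, treeDist_add_of_mem_support hG f hxz,
    treeDist_add_of_mem_support hG f hyz, treeDist_comm hG f m y]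

end TreeDist

/-- Equivalently: the two largest of the sums `d x y + d z t`, `d x z + d y t`, `d x t + d y z`
are equal. -/
def FourPointCondition {V : Type} (d : V → V → ℝ) : Prop :=
  ∀ x y z t, d x y + d z t ≤ max (d x z + d y t) (d x t + d y z)

theorem FourPointCondition.lt_of_lt_of_le_of_lt {V : Type} {d : V → V → ℝ}
    (h4 : FourPointCondition d) (hsymm : ∀ x y, d x y = d y x) {u v a b : V}
    (hua : d u a < d v a) (hvu : d v u ≤ d v a) (hab : d a b < d v b) : d u b < d v b := by
  by_contra! hge
  rcases le_max_iff.1 (h4 v a u b) with h | h <;> linarith [hsymm a u]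

/-- Let `a` and `b` be the medians of `x, y, z` and of `x, y, t`; both lie on the path from `x`
to `y`, and `d z t ≤ d z a + d a b + d b t`, so the claim comes down to the order of `a` and `b`
along that path. -/
theorem treeDist_fourPointCondition {W : Type} {G : SimpleGraph W} (hG : G.IsTree)
    {f : Sym2 W → ℝ} (hf : ∀ e ∈ G.edgeSet, 0 < f e) :
    FourPointCondition (treeDist G hG f) := by
  intro x y z t
  set D := treeDist G hG f
  obtain ⟨a, hxya, hxza, hyza⟩ := hG.exists_median x y z
  obtain ⟨b, hxyb, hxtb, hytb⟩ := hG.exists_median x y t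
  have hsplit := fun {x y m} (hm : m ∈ (hG.uniquePath x y).support) =>
    treeDist_add_of_mem_support hG f hm
  have hcomm := treeDist_comm hG f
  have hzt : D z t ≤ D z a + D a b + D b t := by
    linarith [treeDist_triangle hG hf z a t, treeDist_triangle hG hf a b t]
  rcases hG.mem_support_uniquePath_or hxya hxyb with hb | hb
  · refine le_max_of_le_left ?_
    linarith [hsplit hxya, hsplit hxza, hsplit hyza, hsplit hxyb, hsplit hxtb, hsplit hytb,
      hsplit hb, hcomm a z, hcomm b y, hcomm a b, hcomm b a]
  · refine le_max_of_le_right ?_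
    linarith [hsplit hxya, hsplit hxza, hsplit hyza, hsplit hxyb, hsplit hxtb, hsplit hytb,
      hsplit hb, hcomm a z, hcomm b y, hcomm a y, hcomm a b]

section TreeMetric

variable {V : Type} {d : V → V → ℝ}

theorem IsTreeMetric.symm (hd : IsTreeMetric d) (x y : V) : d x y = d y x := by
  obtain ⟨W, _, G, hG, f, ι, -, -, hdist⟩ := hd
  rw [hdist, hdist, treeDist_comm]

theorem IsTreeMetric.self_eq_zero (hd : IsTreeMetric d) (x : V) : d x x = 0 := by
  obtain ⟨W, _, G, hG, f, ι, -, -, hdist⟩ := hd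
  rw [hdist, treeDist_self]

theorem IsTreeMetric.pos (hd : IsTreeMetric d) {x y : V} (hxy : x ≠ y) : 0 < d x y := by
  obtain ⟨W, _, G, hG, f, ι, hf, hι, hdist⟩ := hd
  rw [hdist]
  exact treeDist_pos hG hf (hι.ne hxy)

theorem IsTreeMetric.fourPointCondition (hd : IsTreeMetric d) : FourPointCondition d := by
  obtain ⟨W, _, G, hG, f, ι, hf, -, hdist⟩ := hd
  intro x y z t
  simp only [hdist]
  exact treeDist_fourPointCondition hG hf _ _ _ _

end TreeMetric

section SpanningTree

variable {V : Type} [Fintype V]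

theorem isSpanningTreeEdges_iff {E : Finset (Sym2 V)} (hE : ∀ e ∈ E, ¬ e.IsDiag) :
    IsSpanningTreeEdges (E : Set (Sym2 V)) ↔
      (fromEdgeSet (E : Set (Sym2 V))).Connected ∧ E.card + 1 = Fintype.card V := by
  have hedges : (fromEdgeSet (E : Set (Sym2 V))).edgeSet = E := by
    rw [edgeSet_fromEdgeSet, sdiff_eq_left]
    exact Set.disjoint_left.2 fun e heE hdiag => hE e heE hdiag
  rw [IsSpanningTreeEdges, isTree_iff_connected_and_card, hedges, Nat.card_coe_set_eq,
    Set.ncard_coe_finset, Nat.card_eq_fintype_card]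
  exact and_iff_right hE

variable [DecidableEq V]

/-- The tree path from `a` to `b` closes up with `s(a, b)` to a cycle through `s(p, q)`, so the
exchange keeps the graph connected; it also keeps the number of edges. -/
theorem IsSpanningTreeEdges.insert_erase {M : Finset (Sym2 V)}
    (hM : IsSpanningTreeEdges (M : Set (Sym2 V))) {a b p q : V}
    {R : (fromEdgeSet (M : Set (Sym2 V))).Walk a b} (hR : R.IsPath) (hab : a ≠ b)
    (habM : s(a, b) ∉ M) (hpq : s(p, q) ∈ R.edges) :
    IsSpanningTreeEdges
      ((insert s(a, b) (M.erase s(p, q)) : Finset (Sym2 V)) : Set (Sym2 V)) := by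
  have hpqM : s(p, q) ∈ M := (edgeSet_fromEdgeSet _ ▸ R.edges_subset_edgeSet hpq).1
  have hdiag : ∀ e ∈ insert s(a, b) (M.erase s(p, q)), ¬ e.IsDiag := by
    simp only [Finset.mem_insert, Finset.mem_erase]
    rintro e (rfl | ⟨-, he⟩)
    · exact hab
    · exact hM.1 e he
  obtain ⟨hconn, hcard⟩ := (isSpanningTreeEdges_iff hM.1).1 hM
  rw [isSpanningTreeEdges_iff hdiag, Finset.card_insert_of_notMem (by simp [habM]),
    Finset.card_erase_add_one hpqM]
  refine ⟨?_, hcard⟩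
  set H := fromEdgeSet ((insert s(a, b) M : Finset (Sym2 V)) : Set (Sym2 V))
  have hle : fromEdgeSet (M : Set (Sym2 V)) ≤ H :=
    fromEdgeSet_mono (by simp [Finset.coe_insert, Set.subset_insert])
  have hba : H.Adj b a := by simp [H, hab.symm, Sym2.eq_swap]
  have hcycle : (Walk.cons hba (R.mapLe hle)).IsCycle := by
    refine (cons_isCycle_iff _ hba).2 ⟨hR.mapLe hle, ?_⟩
    rw [edges_mapLe_eq_edges, Sym2.eq_swap]
    exact fun h => habM (edgeSet_fromEdgeSet _ ▸ R.edges_subset_edgeSet h).1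
  have hnotBridge : ¬ H.IsBridge s(p, q) := by
    rw [isBridge_iff, not_not]
    refine (adj_and_reachable_delete_edges_iff_exists_cycle.2 ⟨b, _, hcycle, ?_⟩).2
    simp [hpq]
  refine ((hconn.mono hle).connected_delete_edge_of_not_isBridge hnotBridge).mono ?_
  intro x y hxy
  simp only [deleteEdges_adj, fromEdgeSet_adj, H, Finset.coe_insert, Finset.coe_erase,
    Set.mem_insert_iff, Set.mem_sdiff, Finset.mem_coe, Set.mem_singleton_iff] at hxy ⊢
  tauto

end SpanningTree

section CycleProperty

variable {V : Type} {d : V → V → ℝ}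

theorem sym2Weight_mk (hsymm : ∀ x y, d x y = d y x) (x y : V) :
    sym2Weight d s(x, y) = d x y := by
  simp only [sym2Weight, Sym2.lift_mk, hsymm y x, add_self_div_two]

theorem SimpleGraph.Walk.IsPath.ne_of_mem_edges {G : SimpleGraph V} {a b : V} {R : G.Walk a b}
    (hR : R.IsPath) {e : Sym2 V} (he : e ∈ R.edges) : a ≠ b := by
  rintro rfl
  simp [eq_nil_iff_nil.2 (isPath_iff_nil.1 hR)] at he

variable [Fintype V] [DecidableEq V] {M : Finset (Sym2 V)}

/-- The cycle property of minimum spanning trees: otherwise exchanging `s(p, q)` for `s(a, b)`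
would give a lighter spanning tree. -/
theorem IsMSTOver.le_of_mem_edges (hM : IsMSTOver d Set.univ M) (hsymm : ∀ x y, d x y = d y x)
    {a b p q : V} {R : (fromEdgeSet (M : Set (Sym2 V))).Walk a b} (hR : R.IsPath)
    (hpq : s(p, q) ∈ R.edges) (hne : s(p, q) ≠ s(a, b)) : d p q ≤ d a b := by
  have hab : a ≠ b := hR.ne_of_mem_edges hpq
  have habM : s(a, b) ∉ M := by
    intro habM
    have hadj : (fromEdgeSet (M : Set (Sym2 V))).Adj a b := by simpa [hab] using habM
    have hsingle : R = Path.singleton hadj := congrArg Subtype.val <|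
      (hM.2.1.2.isAcyclic.subsingleton_path a b).elim ⟨R, hR⟩ (Path.singleton hadj)
    simp [hsingle, Path.singleton, hne] at hpq
  have hpqM : s(p, q) ∈ M := (edgeSet_fromEdgeSet _ ▸ R.edges_subset_edgeSet hpq).1
  have hle := hM.2.2 _ (Set.subset_univ _) (hM.2.1.insert_erase hR hab habM hpq)
  rw [edgesWeight, edgesWeight, Finset.sum_insert (by simp [habM]),
    ← Finset.add_sum_erase _ _ hpqM, sym2Weight_mk hsymm, sym2Weight_mk hsymm] at hle
  linarith

theorem IsMSTOver.lt_of_mem_edges (hM : IsMSTOver d Set.univ M) (hsymm : ∀ x y, d x y = d y x)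
    (hdd : DistinctDists d) {a b p q : V} {R : (fromEdgeSet (M : Set (Sym2 V))).Walk a b}
    (hR : R.IsPath) (hpq : s(p, q) ∈ R.edges) (hne : s(p, q) ≠ s(a, b)) : d p q < d a b := by
  refine (hM.le_of_mem_edges hsymm hR hpq hne).lt_of_ne fun h => hne (hdd _ _ _ _ ?_ ?_ h)
  · exact (R.adj_of_mem_edges hpq).ne
  · exact hR.ne_of_mem_edges hpq

end CycleProperty

theorem IsMSTOver.dist_lt_of_cons_isPath {V : Type} [Fintype V] [DecidableEq V]
    {d : V → V → ℝ} {M : Finset (Sym2 V)} (hM : IsMSTOver d Set.univ M)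
    (hsymm : ∀ x y, d x y = d y x) (hdd : DistinctDists d) (hzero : ∀ x, d x x = 0)
    (hpos : ∀ x y, x ≠ y → 0 < d x y) (h4 : FourPointCondition d)
    {v u x : V} (h : (fromEdgeSet (M : Set (Sym2 V))).Adj v u)
    (P : (fromEdgeSet (M : Set (Sym2 V))).Walk u x) (hP : (cons h P).IsPath) : d u x < d v x := by
  induction P using concatRec with
  | Hnil => simpa [hzero] using hpos _ _ h.ne
  | @Hconcat u a b P hab ih =>
    rw [← concat_cons, concat_isPath_iff] at hP
    have hva : v ≠ a := hP.1.ne_of_mem_edges (e := s(v, u)) (by simp)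
    refine h4.lt_of_lt_of_le_of_lt hsymm (ih h hP.1) ?_ ?_
    · rcases eq_or_ne u a with rfl | hua
      · exact le_rfl
      · exact hM.le_of_mem_edges hsymm hP.1 (by simp) (by simp [hua, hva])
    · refine hM.lt_of_mem_edges hsymm hdd (hP.1.concat hP.2 hab) (by simp [edges_concat]) ?_
      simp [hva.symm, hab.ne]

/-- In a tree metric with pairwise distinct distances, if distinct `v, w` are not
joined by an MST edge, then there is a vertex `u` with `u ≺ (v,w)` and `{v,u}` an MST edge. -/
theorem mst_nonedge_relative_neighbor {V : Type} [Fintype V] [DecidableEq V] (d : V → V → ℝ)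
    (htm : IsTreeMetric d) (hdd : DistinctDists d)
    (M : Finset (Sym2 V)) (hM : IsMSTOver d Set.univ M)
    (v w : V) (hne : v ≠ w) (hvw : s(v, w) ∉ M) :
    ∃ u : V, (d u v < d v w ∧ d u w < d v w) ∧ s(v, u) ∈ M := by
  obtain ⟨P, hP, -⟩ := hM.2.1.2.existsUnique_path v w
  cases P with
  | nil => exact absurd rfl hne
  | @cons _ u _ h Q =>
    have hvuM : s(v, u) ∈ M := by simpa using h.1
    have huw : u ≠ w := by
      rintro rfl
      exact hvw hvuM
    refine ⟨u, ⟨?_, ?_⟩, hvuM⟩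
    · rw [htm.symm u v]
      exact hM.lt_of_mem_edges htm.symm hdd hP (by simp) (by simp [huw, hne])
    · exact hM.dist_lt_of_cons_isPath htm.symm hdd htm.self_eq_zero (fun _ _ => htm.pos)
        htm.fourPointCondition h Q hP
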